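/- Let N be a positive integer and 1 ≤ n ≤ N. With K_N(θ,φ) := (1/(2π)) ∑_{l=0}^{N−1} cos((l − (N−1)/2)(θ − φ)), for all real θ_1, …, θ_n one has ∫_{[0,2π]^{N−n}} det( K_N(θ_j, θ_k) )_{j,k=1}^{N} dθ_{n+1} ⋯ dθ_N = (N−n)! · det( K_N(θ_j, θ_k) )_{j,k=1}^{n}. -/

import Mathlib

open Real MeasureTheory Finset

/-!
Expanding the determinant along the row and the column of the variable `t` to be integrated out
gives `K(t,t) det B - ∑ᵢⱼ K(xᵢ,t) K(t,xⱼ) (adj B)ⱼᵢ`, where `B = (K(xᵢ,xⱼ))` is the `q × q`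
matrix of the remaining variables. The circular kernel is `(2π)⁻¹ ∑ₗ e^{i aₗ (u - v)}`, with
frequencies `aₗ = l - (N-1)/2` differing by integers, so it reproduces itself,
`∫ K(u,t) K(t,v) dt = K(u,v)`, and `∫ K(t,t) dt = N`. Since `∑ᵢⱼ Bᵢⱼ (adj B)ⱼᵢ = q det B`, one
integration multiplies the determinant by `N - q`, and integrating out the variables one at a time
produces `(N - n)(N - n - 1) ⋯ 1 = (N - n)!`.
-/

/-- The circular sine kernel
`K_N(θ,φ) = (1/2π) ∑_{l=0}^{N-1} cos((l-(N-1)/2)(θ-φ))`. -/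
noncomputable def circularKernel (N : ℕ) (θ φ : ℝ) : ℝ :=
  (1 / (2 * π)) * ∑ l ∈ Finset.range N, Real.cos (((l : ℝ) - ((N : ℝ) - 1) / 2) * (θ - φ))

theorem Matrix.trace_mul_adjugate {n R : Type*} [Fintype n] [DecidableEq n] [CommRing R]
    (A : Matrix n n R) : (A * A.adjugate).trace = Fintype.card n * A.det := by
  rw [mul_adjugate, trace_smul, trace_one, smul_eq_mul, mul_comm]

theorem Matrix.det_submatrix_succAbove_eq_neg_one_pow_mul_adjugate {R : Type*} [CommRing R]
    {q : ℕ} (B : Matrix (Fin (q + 1)) (Fin (q + 1)) R) (i j : Fin (q + 1)) :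
    (B.submatrix i.succAbove j.succAbove).det = (-1) ^ (i + j : ℕ) * B.adjugate j i := by
  rw [adjugate_fin_succ_eq_det_submatrix, ← mul_assoc, ← pow_add, Even.neg_one_pow ⟨_, rfl⟩,
    one_mul]

theorem Matrix.det_succ_eq_mul_det_sub_sum_adjugate {R : Type*} [CommRing R] {q : ℕ}
    (M : Matrix (Fin (q + 1)) (Fin (q + 1)) R) :
    M.det = M 0 0 * (M.submatrix Fin.succ Fin.succ).det -
      ∑ i, ∑ j, M i.succ 0 * M 0 j.succ * (M.submatrix Fin.succ Fin.succ).adjugate j i := by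
  cases q with
  | zero => simp [det_unique]
  | succ q =>
    set B := M.submatrix Fin.succ Fin.succ
    have hminor : ∀ i : Fin (q + 1), (M.submatrix i.succ.succAbove Fin.succ).det =
        ∑ j : Fin (q + 1),
          (-1) ^ (j : ℕ) * M 0 j.succ * (B.submatrix i.succAbove j.succAbove).det := by
      intro i
      rw [det_succ_row_zero]
      simp [B, Fin.succ_succAbove_succ, Function.comp_def]
    rw [det_succ_column_zero, Fin.sum_univ_succ, sub_eq_add_neg, ← sum_neg_distrib]
    simp only [Fin.val_zero, pow_zero, one_mul, hminor, mul_sum, ← sum_neg_distrib,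
      det_submatrix_succAbove_eq_neg_one_pow_mul_adjugate]
    congr 1
    refine sum_congr rfl fun i _ => sum_congr rfl fun j _ => ?_
    have hsign : ((-1 : R) ^ (i : ℕ) * (-1) ^ (j : ℕ)) ^ 2 = 1 := by
      rw [← pow_add, ← pow_mul, pow_mul', neg_one_sq, one_pow]
    rw [Fin.val_succ, pow_succ]
    linear_combination -(M i.succ 0 * M 0 j.succ * B.adjugate j i) * hsign

def kernelMatrix {α R ι : Type*} (K : α → α → R) (x : ι → α) : Matrix ι ι R :=
  Matrix.of fun j l => K (x j) (x l)

@[simp]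
theorem kernelMatrix_apply {α R ι : Type*} (K : α → α → R) (x : ι → α) (j l : ι) :
    kernelMatrix K x j l = K (x j) (x l) := rfl

@[simp]
theorem kernelMatrix_cons_submatrix_succ {α R : Type*} {q : ℕ} (K : α → α → R) (t : α)
    (x : Fin q → α) :
    (kernelMatrix K (Fin.cons t x : Fin (q + 1) → α)).submatrix Fin.succ Fin.succ =
      kernelMatrix K x := rfl

theorem det_kernelMatrix_comp_equiv {α R ι : Type*} [CommRing R] [Fintype ι] [DecidableEq ι]
    (K : α → α → R) (x : ι → α) (e : ι ≃ ι) :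
    (kernelMatrix K (x ∘ e)).det = (kernelMatrix K x).det :=
  Matrix.det_submatrix_equiv_self e (kernelMatrix K x)

theorem det_kernelMatrix_snoc {α R : Type*} [CommRing R] {q : ℕ} (K : α → α → R)
    (x : Fin q → α) (t : α) :
    (kernelMatrix K (Fin.snoc x t : Fin (q + 1) → α)).det =
      (kernelMatrix K (Fin.cons t x : Fin (q + 1) → α)).det := by
  rw [Fin.snoc_eq_cons_rotate]
  exact det_kernelMatrix_comp_equiv K _ (finRotate (q + 1))

theorem MeasureTheory.integral_pi_fin_succ_eq_integral_integral_snoc {β E : Type*}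
    [MeasurableSpace β] [NormedAddCommGroup E] [NormedSpace ℝ E] (μ : Measure β) [SigmaFinite μ]
    {k : ℕ} {f : (Fin (k + 1) → β) → E} (hf : Integrable f (Measure.pi fun _ => μ)) :
    ∫ η, f η ∂Measure.pi (fun _ => μ) =
      ∫ η, ∫ t, f (Fin.snoc η t) ∂μ ∂Measure.pi (fun _ => μ) := by
  have he := (measurePreserving_piFinSuccAbove (fun _ : Fin (k + 1) => μ) (Fin.last k)).symm
  have hsnoc : ∀ p : β × (Fin k → β),
      (MeasurableEquiv.piFinSuccAbove (fun _ => β) (Fin.last k)).symm p = Fin.snoc p.2 p.1 := by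
    intro p
    simp [MeasurableEquiv.piFinSuccAbove_symm_apply, Fin.insertNthEquiv, Fin.insertNth_last']
  rw [← he.integral_comp', integral_prod_symm]
  · simp only [hsnoc]
  · exact (he.integrable_comp_emb (MeasurableEquiv.measurableEmbedding _)).mpr hf

theorem measurable_fin_append_right {α : Type*} [MeasurableSpace α] {p k : ℕ} (x : Fin p → α) :
    Measurable fun η : Fin k → α => Fin.append x η := by
  refine measurable_pi_iff.mpr fun j => Fin.addCases (fun i => ?_) (fun i => ?_) j
  · simp only [Fin.append_left]
    exact measurable_const
  · simp only [Fin.append_right]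
    exact measurable_pi_apply i

section Gaudin

variable {α : Type*} [MeasurableSpace α] {μ : Measure α} {K : α → α → ℝ} {c C : ℝ}

theorem measurable_det_kernelMatrix {β ι : Type*} [Fintype ι] [DecidableEq ι] [MeasurableSpace β]
    (hK : Measurable (Function.uncurry K)) {f : β → ι → α} (hf : Measurable f) :
    Measurable fun y => (kernelMatrix K (f y)).det := by
  simp_rw [Matrix.det_apply, kernelMatrix_apply]
  have hentry : ∀ j l, Measurable fun y => K (f y j) (f y l) := fun j l =>
    hK.comp ((measurable_pi_apply j).comp hf |>.prodMk ((measurable_pi_apply l).comp hf))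
  fun_prop

omit [MeasurableSpace α] in
theorem abs_det_kernelMatrix_le {ι : Type*} [Fintype ι] [DecidableEq ι]
    (hKb : ∀ x y, |K x y| ≤ C) (x : ι → α) :
    |(kernelMatrix K x).det| ≤ (Fintype.card ι).factorial * C ^ Fintype.card ι := by
  rw [← nsmul_eq_mul]
  exact Matrix.det_le (A := kernelMatrix K x) (abv := AbsoluteValue.abs) fun j l => hKb (x j) (x l)

theorem integrable_det_kernelMatrix {β ι : Type*} [Fintype ι] [DecidableEq ι] [MeasurableSpace β]
    {ν : Measure β} [IsFiniteMeasure ν] (hK : Measurable (Function.uncurry K))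
    (hKb : ∀ x y, |K x y| ≤ C) {f : β → ι → α} (hf : Measurable f) :
    Integrable (fun y => (kernelMatrix K (f y)).det) ν :=
  Integrable.of_bound (measurable_det_kernelMatrix hK hf).aestronglyMeasurable _
    (ae_of_all _ fun y => abs_det_kernelMatrix_le hKb (f y))

theorem integrable_kernel_diag [IsFiniteMeasure μ] (hK : Measurable (Function.uncurry K))
    (hKb : ∀ x y, |K x y| ≤ C) : Integrable (fun t => K t t) μ :=
  Integrable.of_bound (hK.comp (measurable_id.prodMk measurable_id)).aestronglyMeasurable C
    (ae_of_all _ fun t => hKb t t)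

theorem integrable_kernel_mul [IsFiniteMeasure μ] (hK : Measurable (Function.uncurry K))
    (hKb : ∀ x y, |K x y| ≤ C) (u v : α) : Integrable (fun t => K u t * K t v) μ :=
  Integrable.of_bound
    ((hK.comp (measurable_const.prodMk measurable_id)).mul
      (hK.comp (measurable_id.prodMk measurable_const))).aestronglyMeasurable (C * C)
    (ae_of_all _ fun t => by
      rw [Real.norm_eq_abs, abs_mul]
      exact mul_le_mul (hKb u t) (hKb t v) (abs_nonneg _) ((abs_nonneg _).trans (hKb u t)))

theorem integral_det_kernelMatrix_cons {q : ℕ}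
    (hdiag_int : Integrable (fun t => K t t) μ) (hdiag : ∫ t, K t t ∂μ = c)
    (hrepr_int : ∀ u v, Integrable (fun t => K u t * K t v) μ)
    (hrepr : ∀ u v, ∫ t, K u t * K t v ∂μ = K u v) (x : Fin q → α) :
    ∫ t, (kernelMatrix K (Fin.cons t x : Fin (q + 1) → α)).det ∂μ =
      (c - q) * (kernelMatrix K x).det := by
  have hterm_int : ∀ i j, Integrable (fun t => K (x i) t * K t (x j) *
      (kernelMatrix K x).adjugate j i) μ := fun i j => (hrepr_int _ _).mul_const _
  simp_rw [Matrix.det_succ_eq_mul_det_sub_sum_adjugate, kernelMatrix_cons_submatrix_succ]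
  simp only [kernelMatrix_apply, Fin.cons_zero, Fin.cons_succ]
  rw [integral_sub (hdiag_int.mul_const _)
      (integrable_finsetSum _ fun i _ => integrable_finsetSum _ fun j _ => hterm_int i j),
    integral_mul_const, hdiag,
    integral_finsetSum _ fun i _ => integrable_finsetSum _ fun j _ => hterm_int i j]
  simp_rw [integral_finsetSum _ fun j _ => hterm_int _ j, integral_mul_const, hrepr]
  have htrace := (kernelMatrix K x).trace_mul_adjugate
  simp only [Matrix.trace, Matrix.diag, Matrix.mul_apply, kernelMatrix_apply,
    Fintype.card_fin] at htrace
  rw [htrace]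
  ring

theorem integral_det_kernelMatrix_append [IsFiniteMeasure μ]
    (hK : Measurable (Function.uncurry K)) (hKb : ∀ x y, |K x y| ≤ C)
    (hdiag : ∫ t, K t t ∂μ = c) (hrepr : ∀ u v, ∫ t, K u t * K t v ∂μ = K u v)
    (k : ℕ) {p : ℕ} (x : Fin p → α) :
    ∫ η, (kernelMatrix K (Fin.append x η)).det ∂Measure.pi (fun _ : Fin k => μ) =
      (descPochhammer ℝ k).eval (c - p) * (kernelMatrix K x).det := by
  induction k with
  | zero =>
    have hx : ∀ η : Fin 0 → α, Fin.append x η = x := fun η => by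
      rw [Subsingleton.elim η Fin.elim0, Fin.append_elim0]
      rfl
    simp [hx, measureReal_def]
  | succ k ih =>
    rw [integral_pi_fin_succ_eq_integral_integral_snoc μ
      (integrable_det_kernelMatrix hK hKb (measurable_fin_append_right x))]
    simp_rw [Fin.append_snoc, det_kernelMatrix_snoc,
      integral_det_kernelMatrix_cons (integrable_kernel_diag hK hKb) hdiag
        (integrable_kernel_mul hK hKb) hrepr]
    rw [integral_const_mul, ih, descPochhammer_succ_right]
    simp only [Nat.add_eq, Nat.cast_add, Polynomial.eval_mul, Polynomial.eval_sub,
      Polynomial.eval_X, Polynomial.eval_natCast]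
    ring

end Gaudin

theorem setIntegral_Icc_exp_int_mul_I (k : ℤ) :
    ∫ t in Set.Icc 0 (2 * π), Complex.exp (k * t * Complex.I) =
      if k = 0 then (2 * π : ℂ) else 0 := by
  rw [integral_Icc_eq_integral_Ioc, ← intervalIntegral.integral_of_le two_pi_pos.le]
  split_ifs with hk
  · simp [hk]
  · have hkI : (k : ℂ) * Complex.I ≠ 0 := mul_ne_zero (Int.cast_ne_zero.mpr hk) Complex.I_ne_zero
    simp_rw [mul_right_comm _ _ Complex.I]
    rw [integral_exp_mul_complex hkI]
    push_cast
    rw [show (k : ℂ) * Complex.I * (2 * π) = k * (2 * π * Complex.I) by ring,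
      Complex.exp_int_mul_two_pi_mul_I]
    simp

noncomputable def circularFrequency (N l : ℕ) : ℝ := l - ((N : ℝ) - 1) / 2

theorem circularFrequency_reflect {N l : ℕ} (hl : l < N) :
    circularFrequency N (N - 1 - l) = -circularFrequency N l := by
  rw [circularFrequency, circularFrequency, Nat.cast_sub (by omega), Nat.cast_sub (by omega)]
  push_cast
  ring

theorem circularKernel_eq_sum_cos (N : ℕ) (θ φ : ℝ) :
    circularKernel N θ φ =
      (2 * π)⁻¹ * ∑ l ∈ range N, Real.cos (circularFrequency N l * (θ - φ)) := by
  rw [circularKernel, one_div]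
  rfl

theorem circularKernel_eq_sum_exp (N : ℕ) (θ φ : ℝ) :
    (circularKernel N θ φ : ℂ) =
      (2 * π : ℂ)⁻¹ * ∑ l ∈ range N, Complex.exp (circularFrequency N l * (θ - φ) * Complex.I) := by
  -- The frequencies are symmetric about `0`, so the sine parts cancel.
  have hreflect : ∑ l ∈ range N, Complex.exp (-(circularFrequency N l * (θ - φ)) * Complex.I) =
      ∑ l ∈ range N, Complex.exp (circularFrequency N l * (θ - φ) * Complex.I) := by
    rw [← sum_range_reflect]
    refine sum_congr rfl fun l hl => ?_
    rw [circularFrequency_reflect (by simpa using hl)]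
    push_cast
    ring_nf
  rw [circularKernel_eq_sum_cos]
  push_cast
  simp_rw [Complex.cos, ← sum_div, sum_add_distrib, hreflect]
  ring

theorem setIntegral_Icc_exp_circularFrequency_mul_exp (N l l' : ℕ) (u v : ℝ) :
    ∫ t in Set.Icc 0 (2 * π), Complex.exp (circularFrequency N l * (u - t) * Complex.I) *
        Complex.exp (circularFrequency N l' * (t - v) * Complex.I) =
      if l = l' then 2 * π * Complex.exp (circularFrequency N l * (u - v) * Complex.I) else 0 := by
  have hsplit : ∀ t : ℝ, Complex.exp (circularFrequency N l * (u - t) * Complex.I) *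
        Complex.exp (circularFrequency N l' * (t - v) * Complex.I) =
      Complex.exp ((circularFrequency N l * u - circularFrequency N l' * v) * Complex.I) *
        Complex.exp (((l' - l : ℤ) : ℂ) * t * Complex.I) := by
    intro t
    rw [← Complex.exp_add, ← Complex.exp_add]
    congr 1
    simp only [circularFrequency]
    push_cast
    ring
  have hfreq : (l' : ℤ) - l = 0 ↔ l = l' := by omega
  simp_rw [hsplit]
  rw [integral_const_mul, setIntegral_Icc_exp_int_mul_I]
  simp only [hfreq]
  split_ifs with h
  · subst h
    rw [← mul_sub]
    ring
  · rw [mul_zero]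

theorem setIntegral_circularKernel_mul (N : ℕ) (u v : ℝ) :
    ∫ t in Set.Icc 0 (2 * π), circularKernel N u t * circularKernel N t v =
      circularKernel N u v := by
  apply Complex.ofReal_injective
  rw [← integral_complex_ofReal]
  push_cast
  simp_rw [circularKernel_eq_sum_exp, mul_mul_mul_comm _ (∑ l ∈ range N, _), sum_mul_sum]
  have hint : ∀ l l' : ℕ, IntegrableOn (fun t : ℝ =>
      Complex.exp (circularFrequency N l * (u - t) * Complex.I) *
        Complex.exp (circularFrequency N l' * (t - v) * Complex.I)) (Set.Icc 0 (2 * π)) :=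
    fun l l' => Continuous.integrableOn_Icc (by fun_prop)
  rw [integral_const_mul,
    integral_finsetSum _ fun l _ => integrable_finsetSum _ fun l' _ => hint l l']
  simp_rw [integral_finsetSum _ fun l' _ => hint _ l',
    setIntegral_Icc_exp_circularFrequency_mul_exp, sum_ite_eq,
    sum_ite_mem, inter_self]
  rw [← mul_sum, mul_assoc, inv_mul_cancel_left₀ (by simp [pi_ne_zero])]

theorem setIntegral_circularKernel_diag (N : ℕ) :
    ∫ t in Set.Icc 0 (2 * π), circularKernel N t t = N := by
  simp_rw [circularKernel_eq_sum_cos, sub_self, mul_zero, Real.cos_zero, sum_const, card_range,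
    nsmul_one]
  rw [setIntegral_const, volume_real_Icc_of_le two_pi_pos.le, smul_eq_mul, sub_zero]
  field_simp

theorem continuous_circularKernel (N : ℕ) : Continuous (Function.uncurry (circularKernel N)) := by
  unfold circularKernel
  fun_prop

theorem abs_circularKernel_le (N : ℕ) (θ φ : ℝ) : |circularKernel N θ φ| ≤ (2 * π)⁻¹ * N := by
  rw [circularKernel_eq_sum_cos, abs_mul, abs_of_pos (by positivity)]
  gcongr
  calc |∑ l ∈ range N, Real.cos (circularFrequency N l * (θ - φ))|
      ≤ ∑ l ∈ range N, |Real.cos (circularFrequency N l * (θ - φ))| := abs_sum_le_sum_abs _ _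
    _ ≤ ∑ _l ∈ range N, (1 : ℝ) := sum_le_sum fun l _ => abs_cos_le_one _
    _ = N := by simp

theorem circularKernel_correlation_integrated_out (n m : ℕ) (θ : Fin n → ℝ) :
    (∫ η : Fin m → ℝ in Set.univ.pi (fun _ => Set.Icc (0 : ℝ) (2 * π)),
        (Matrix.of fun j k : Fin (n + m) =>
          circularKernel (n + m) (Fin.append θ η j) (Fin.append θ η k)).det)
    = (Nat.factorial m : ℝ) *
        (Matrix.of fun j k : Fin n => circularKernel (n + m) (θ j) (θ k)).det := by
  have hμ : (volume : Measure (Fin m → ℝ)).restrict (Set.univ.pi fun _ => Set.Icc 0 (2 * π)) =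
      Measure.pi fun _ => volume.restrict (Set.Icc 0 (2 * π)) := by
    rw [volume_pi, Measure.restrict_pi_pi]
  have hfactor : (descPochhammer ℝ m).eval (((n + m : ℕ) : ℝ) - n) = m.factorial := by
    rw [Nat.cast_add, add_sub_cancel_left, descPochhammer_eval_eq_descFactorial,
      Nat.descFactorial_self]
  rw [hμ, ← hfactor]
  exact integral_det_kernelMatrix_append (continuous_circularKernel (n + m)).measurable
    (abs_circularKernel_le (n + m)) (setIntegral_circularKernel_diag (n + m))
    (setIntegral_circularKernel_mul (n + m)) m θ
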